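/- arXiv:2411.10622 — 5 statements merged into one kernel-verified Lean document; each statement's English description precedes it below -/
import Mathlib

section
/- Universal approximation theorem (Cybenko): let σ : ℝ → ℝ be a continuous sigmoidal function, i.e., σ(t) → 1 as t → +∞ and σ(t) → 0 as t → −∞. Then for every n ≥ 1, every continuous function f : [0,1]^n → ℝ, and every ε > 0, there exist N ∈ ℕ, real coefficients α_1, …, α_N, vectors w_1, …, w_N ∈ ℝ^n, and real numbers b_1, …, b_N such that sup_{x ∈ [0,1]^n} | f(x) − Σ_{i=1}^{N} α_i σ(⟨w_i, x⟩ + b_i) | < ε; equivalently, finite sums of the form Σ_{i=1}^{N} α_i σ(⟨w_i, x⟩ + b_i) are dense in C([0,1]^n) with the supremum norm. -/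
/-!
Composed with a steep dilation, a sigmoid is uniformly close to the Heaviside step away from the
jump. A staircase `∑ₖ (g pₖ - g pₖ₋₁) H(t - qₖ)`, with the jumps `qₖ` between fine grid points
`pₖ`, approximates a continuous `g` on an interval, and replacing each step by a dilated sigmoid
costs little: all terms except the one whose jump is near `t` are controlled by the limits of `σ`
at `±∞`, and that one has a small coefficient by uniform continuity. Hence the closed span of the
ridge functions `x ↦ σ (⟨w, x⟩ + b)` contains `x ↦ g ⟨w, x⟩` for every continuous `g`, in
particular the exponentials `x ↦ exp ⟨w, x⟩`. These span an algebra that separates points, so by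
Stone–Weierstrass the closed span is everything.
-/

open Filter Finset Topology

noncomputable def heaviside (s : ℝ) : ℝ := if 0 ≤ s then 1 else 0

theorem heaviside_mul {c : ℝ} (hc : 0 < c) (s : ℝ) : heaviside (c * s) = heaviside s := by
  simp only [heaviside, mul_nonneg_iff_of_pos_left hc]

def increments {G : Type*} [AddCommGroup G] (u : ℕ → G) : ℕ → G
  | 0 => u 0
  | k + 1 => u (k + 1) - u k

section Staircase

variable {G : Type*} [AddCommGroup G]

theorem sum_range_succ_increments (u : ℕ → G) (j : ℕ) :
    ∑ k ∈ range (j + 1), increments u k = u j := by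
  induction j with
  | zero => simp [increments]
  | succ j ih => rw [sum_range_succ, ih, increments]; abel

theorem sum_range_ite_le_increments (u : ℕ → G) {j m : ℕ} (hjm : j ≤ m) :
    ∑ k ∈ range (m + 1), (if k ≤ j then increments u k else 0) = u j := by
  rw [← sum_range_succ_increments u j, ← sum_filter]
  congr 1
  ext k
  simp only [mem_filter, mem_range]
  omega

end Staircase

theorem card_filter_abs_sub_natCast_lt_half_le_one (x : ℝ) (s : Finset ℕ) :
    #(s.filter fun k : ℕ => |x - k| < 1 / 2) ≤ 1 := by
  refine card_le_one.2 fun k hk l hl => ?_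
  simp only [mem_filter] at hk hl
  have hkl : |(k : ℝ) - l| < 1 := by
    calc |(k : ℝ) - l| = |(x - l) - (x - k)| := by ring_nf
      _ ≤ |x - l| + |x - k| := abs_sub _ _
      _ < 1 := by linarith [hk.2, hl.2]
  rw [abs_sub_lt_iff] at hkl
  have h₁ : k < l + 1 := by exact_mod_cast (by linarith : (k : ℝ) < l + 1)
  have h₂ : l < k + 1 := by exact_mod_cast (by linarith : (l : ℝ) < k + 1)
  omega

theorem abs_sum_mul_le_of_tails {e : ℝ → ℝ} {T η η' C : ℝ} (hT : 0 ≤ T) (hη : 0 ≤ η)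
    (htail : ∀ s, T ≤ |s| → |e s| ≤ η') (hC : ∀ s, |e s| ≤ C) {c : ℕ → ℝ} {m : ℕ}
    (hc : ∀ k, 1 ≤ k → k ≤ m → |c k| ≤ η) {x : ℝ} (hx : 1 / 2 ≤ x) :
    |∑ k ∈ range (m + 1), c k * e (2 * T * (x - k))| ≤
      η' * ∑ k ∈ range (m + 1), |c k| + η * C := by
  have hC0 : 0 ≤ C := (abs_nonneg _).trans (hC 0)
  have hη' : 0 ≤ η' := (abs_nonneg _).trans (htail T (le_abs_self T))
  -- At most one `k` has `|x - k| < 1 / 2`; for every other `k` the argument of `e` is at least `T`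
  -- in size.
  have hterm : ∀ k ∈ range (m + 1), |c k * e (2 * T * (x - k))| ≤
      η' * |c k| + if |x - k| < 1 / 2 then η * C else 0 := by
    intro k hk
    rw [abs_mul]
    split_ifs with hnear
    · have hk0 : 1 ≤ k := by
        by_contra h
        obtain rfl : k = 0 := by omega
        rw [Nat.cast_zero, sub_zero, abs_lt] at hnear
        linarith
      calc |c k| * |e _| ≤ η * C :=
            mul_le_mul (hc k hk0 (Nat.lt_succ_iff.1 (mem_range.1 hk))) (hC _) (abs_nonneg _) hη
        _ ≤ η' * |c k| + η * C := le_add_of_nonneg_left (by positivity)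
    · have hfar : T ≤ |2 * T * (x - k)| := by
        rw [abs_mul, abs_of_nonneg (by positivity : (0 : ℝ) ≤ 2 * T)]
        nlinarith
      rw [add_zero, mul_comm η']
      exact mul_le_mul_of_nonneg_left (htail _ hfar) (abs_nonneg _)
  calc |∑ k ∈ range (m + 1), c k * e (2 * T * (x - k))|
      ≤ ∑ k ∈ range (m + 1), |c k * e (2 * T * (x - k))| := abs_sum_le_sum_abs _ _
    _ ≤ ∑ k ∈ range (m + 1), (η' * |c k| + if |x - k| < 1 / 2 then η * C else 0) :=
        sum_le_sum hterm
    _ = η' * ∑ k ∈ range (m + 1), |c k| +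
          #((range (m + 1)).filter fun k : ℕ => |x - k| < 1 / 2) * (η * C) := by
        rw [sum_add_distrib, ← mul_sum, ← sum_filter, sum_const, nsmul_eq_mul]
    _ ≤ η' * ∑ k ∈ range (m + 1), |c k| + 1 * (η * C) := by
        gcongr
        exact_mod_cast card_filter_abs_sub_natCast_lt_half_le_one x _
    _ = η' * ∑ k ∈ range (m + 1), |c k| + η * C := by rw [one_mul]

section Sigmoid

variable {σ : ℝ → ℝ} (hσ_top : Tendsto σ atTop (𝓝 1)) (hσ_bot : Tendsto σ atBot (𝓝 0))
include hσ_top hσ_bot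

theorem exists_abs_heaviside_sub_le_of_le_abs {η : ℝ} (hη : 0 < η) :
    ∃ T, 0 < T ∧ ∀ s, T ≤ |s| → |heaviside s - σ s| ≤ η := by
  obtain ⟨A, hA⟩ := eventually_atTop.1 (hσ_top.eventually (Metric.closedBall_mem_nhds 1 hη))
  obtain ⟨B, hB⟩ := eventually_atBot.1 (hσ_bot.eventually (Metric.closedBall_mem_nhds 0 hη))
  refine ⟨max 1 (max A (-B)), by positivity, fun s hs => ?_⟩
  have h₁ := le_max_left 1 (max A (-B))
  have h₂ := (le_max_left A (-B)).trans (le_max_right 1 _)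
  have h₃ := (le_max_right A (-B)).trans (le_max_right 1 _)
  rcases le_abs'.1 hs with hs | hs
  · have := hB s (by linarith)
    rw [Real.dist_eq, sub_zero] at this
    rwa [heaviside, if_neg (by linarith), zero_sub, abs_neg]
  · have := hA s (by linarith)
    rw [Real.dist_eq] at this
    rwa [heaviside, if_pos (by linarith), abs_sub_comm]

theorem exists_abs_heaviside_sub_le (hσ : Continuous σ) :
    ∃ C, ∀ s, |heaviside s - σ s| ≤ C := by
  obtain ⟨C, hC⟩ := isBounded_iff_forall_norm_le.1
    (hσ.isBounded_range_iff_isBigO_atTop_atBot.2 ⟨hσ_top.isBigO_one ℝ, hσ_bot.isBigO_one ℝ⟩)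
  refine ⟨1 + C, fun s => (abs_sub _ _).trans (add_le_add ?_ (hC _ ⟨s, rfl⟩))⟩
  unfold heaviside
  split_ifs <;> simp

end Sigmoid

theorem exists_grid_of_continuousOn {g : ℝ → ℝ} {a b : ℝ} (hab : a < b)
    (hg : ContinuousOn g (Set.Icc a b)) {η : ℝ} (hη : 0 < η) :
    ∃ (m : ℕ) (Δ : ℝ), 0 < Δ ∧ a + m * Δ = b ∧
      ∀ s ∈ Set.Icc a b, ∀ t ∈ Set.Icc a b, |s - t| ≤ Δ → |g s - g t| < η := by
  obtain ⟨δ, hδ, hgδ⟩ := Metric.uniformContinuousOn_iff.1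
    (isCompact_Icc.uniformContinuousOn_of_continuous hg) η hη
  obtain ⟨m, hm⟩ := exists_nat_gt ((b - a) / δ)
  have hm0 : (0 : ℝ) < m := lt_of_le_of_lt (div_nonneg (sub_pos.2 hab).le hδ.le) hm
  have hΔδ : (b - a) / m < δ := by
    rw [div_lt_iff₀ hm0]
    rwa [div_lt_iff₀ hδ, mul_comm] at hm
  refine ⟨m, (b - a) / m, div_pos (sub_pos.2 hab) hm0, by field_simp; ring,
    fun s hs t ht hst => hgδ s hs t ht ?_⟩
  rw [Real.dist_eq]
  exact lt_of_le_of_lt hst hΔδ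

theorem abs_sub_sum_increments_mul_heaviside_lt {g : ℝ → ℝ} {a Δ η : ℝ} {m : ℕ} (hΔ : 0 < Δ)
    (hg : ∀ s ∈ Set.Icc a (a + m * Δ), ∀ t ∈ Set.Icc a (a + m * Δ), |s - t| ≤ Δ →
      |g s - g t| < η)
    {t : ℝ} (ht : t ∈ Set.Icc a (a + m * Δ)) :
    |g t - ∑ k ∈ range (m + 1),
      increments (fun k => g (a + k * Δ)) k * heaviside ((t - a) / Δ + 1 / 2 - k)| < η := by
  -- The jumps sit at the midpoints `a + (k - 1 / 2) * Δ`, so the staircase takes at `t` the value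
  -- of `g` at the nearest grid point.
  set x := (t - a) / Δ + 1 / 2 with hx_def
  have hy : 0 ≤ (t - a) / Δ ∧ (t - a) / Δ ≤ m := by
    rw [div_le_iff₀ hΔ]
    exact ⟨div_nonneg (by linarith [ht.1]) hΔ.le, by linarith [ht.2]⟩
  have hJ₁ := Nat.floor_le (by linarith : 0 ≤ x)
  have hJ₂ := Nat.lt_floor_add_one x
  set J := ⌊x⌋₊
  have hJm : J ≤ m := by
    refine Nat.lt_succ_iff.1 ((Nat.floor_lt' (Nat.succ_ne_zero m)).2 ?_)
    push_cast
    linarith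
  have hstair : ∑ k ∈ range (m + 1),
      increments (fun k => g (a + k * Δ)) k * heaviside (x - k) = g (a + J * Δ) := by
    refine (sum_congr rfl fun k _ => ?_).trans
      (sum_range_ite_le_increments (fun k : ℕ => g (a + k * Δ)) hJm)
    rw [heaviside, mul_ite, mul_one, mul_zero]
    refine if_congr ?_ rfl rfl
    rw [Nat.le_floor_iff (by linarith), sub_nonneg]
  rw [hstair]
  have hJ_mem : a + J * Δ ∈ Set.Icc a (a + m * Δ) :=
    ⟨le_add_of_nonneg_right (by positivity), by gcongr⟩
  refine hg t ht _ hJ_mem ?_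
  have ht_eq : t = a + (x - 1 / 2) * Δ := by rw [hx_def]; field_simp; ring
  rw [ht_eq, abs_le]
  constructor <;> nlinarith

theorem exists_sum_sigmoid_near_on_Icc {σ : ℝ → ℝ} (hσ : Continuous σ)
    (hσ_top : Tendsto σ atTop (𝓝 1)) (hσ_bot : Tendsto σ atBot (𝓝 0)) {g : ℝ → ℝ} {a b : ℝ}
    (hab : a < b) (hg : ContinuousOn g (Set.Icc a b)) {ε : ℝ} (hε : 0 < ε) :
    ∃ (N : ℕ) (α β : ℕ → ℝ) (lam : ℝ), ∀ t ∈ Set.Icc a b,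
      |g t - ∑ k ∈ range N, α k * σ (lam * t + β k)| < ε := by
  obtain ⟨C, hC⟩ := exists_abs_heaviside_sub_le hσ_top hσ_bot hσ
  have hC0 : 0 ≤ C := (abs_nonneg _).trans (hC 0)
  set η := ε / (2 * (1 + C)) with hη_def
  have hη : 0 < η := by positivity
  obtain ⟨m, Δ, hΔ, rfl, hgΔ⟩ := exists_grid_of_continuousOn hab hg hη
  set c := increments (fun k : ℕ => g (a + k * Δ))
  have hc : ∀ k, 1 ≤ k → k ≤ m → |c k| ≤ η := by
    rintro (_ | k) hk hkm
    · omega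
    have hmem : ∀ i ≤ m, a + i * Δ ∈ Set.Icc a (a + m * Δ) := fun i hi =>
      ⟨le_add_of_nonneg_right (by positivity), by gcongr⟩
    refine (hgΔ _ (hmem _ hkm) _ (hmem k (by omega)) ?_).le
    simp [add_mul, abs_of_pos hΔ]
  set S := ∑ k ∈ range (m + 1), |c k|
  obtain ⟨T, hT, htail⟩ :=
    exists_abs_heaviside_sub_le_of_le_abs hσ_top hσ_bot (η := ε / (2 * (S + 1))) (by positivity)
  refine ⟨m + 1, c, fun k => 2 * T * (1 / 2 - a / Δ - k), 2 * T / Δ, fun t ht => ?_⟩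
  set x := (t - a) / Δ + 1 / 2 with hx_def
  have hx : 1 / 2 ≤ x := by
    have : 0 ≤ (t - a) / Δ := div_nonneg (by linarith [ht.1]) hΔ.le
    linarith
  have hstep := abs_sub_sum_increments_mul_heaviside_lt hΔ hgΔ ht
  have herr :=
    abs_sum_mul_le_of_tails (e := fun s => heaviside s - σ s) hT.le hη.le htail hC hc hx
  have hsplit :
      g t - ∑ k ∈ range (m + 1), c k * σ (2 * T / Δ * t + 2 * T * (1 / 2 - a / Δ - k)) =
      (g t - ∑ k ∈ range (m + 1), c k * heaviside (x - k)) +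
        ∑ k ∈ range (m + 1), c k * (heaviside (2 * T * (x - k)) - σ (2 * T * (x - k))) := by
    have hargs : ∀ k : ℕ, 2 * T / Δ * t + 2 * T * (1 / 2 - a / Δ - k) = 2 * T * (x - k) := by
      intro k; rw [hx_def]; ring
    simp_rw [hargs, heaviside_mul (by positivity : (0 : ℝ) < 2 * T), mul_sub (c _),
      sum_sub_distrib]
    ring
  have hS : ε / (2 * (S + 1)) * S ≤ ε / 2 := by
    rw [div_mul_eq_mul_div, div_le_div_iff₀ (by positivity) two_pos]; nlinarith
  have hηC : η + η * C = ε / 2 := by rw [hη_def]; field_simp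
  rw [hsplit]
  calc _ ≤ |g t - ∑ k ∈ range (m + 1), c k * heaviside (x - k)| +
        |∑ k ∈ range (m + 1), c k * (heaviside (2 * T * (x - k)) - σ (2 * T * (x - k)))| :=
        abs_add_le _ _
    _ < η + (ε / (2 * (S + 1)) * S + η * C) := add_lt_add_of_lt_of_le hstep herr
    _ ≤ ε := by linarith

section Ridge

variable {X E : Type*} [TopologicalSpace X] [AddCommGroup E] [Module ℝ E]

def ridgeSpan (σ : C(ℝ, ℝ)) (ℓ : E →ₗ[ℝ] C(X, ℝ)) : Submodule ℝ C(X, ℝ) :=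
  Submodule.span ℝ (Set.range fun p : E × ℝ => σ.comp (ℓ p.1 + ContinuousMap.const X p.2))

variable [CompactSpace X] (σ : C(ℝ, ℝ)) (hσ_top : Tendsto σ atTop (𝓝 1))
  (hσ_bot : Tendsto σ atBot (𝓝 0)) (ℓ : E →ₗ[ℝ] C(X, ℝ))
include hσ_top hσ_bot

theorem comp_mem_topologicalClosure_ridgeSpan (g : C(ℝ, ℝ)) (w : E) :
    g.comp (ℓ w) ∈ (ridgeSpan σ ℓ).topologicalClosure := by
  rw [← SetLike.mem_coe, Submodule.topologicalClosure_coe, Metric.mem_closure_iff]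
  intro ε hε
  obtain ⟨N, α, β, lam, happrox⟩ := exists_sum_sigmoid_near_on_Icc σ.continuous hσ_top hσ_bot
    (by linarith [norm_nonneg (ℓ w)] : -(‖ℓ w‖ + 1) < ‖ℓ w‖ + 1) g.continuous.continuousOn
    (half_pos hε)
  refine ⟨∑ k ∈ range N, α k • σ.comp (ℓ (lam • w) + ContinuousMap.const X (β k)),
    sum_mem fun k _ => Submodule.smul_mem _ _ (Submodule.subset_span ⟨(lam • w, β k), rfl⟩), ?_⟩
  refine lt_of_le_of_lt ((ContinuousMap.dist_le (half_pos hε).le).2 fun x => ?_)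
    (half_lt_self hε)
  have hx : ℓ w x ∈ Set.Icc (-(‖ℓ w‖ + 1)) (‖ℓ w‖ + 1) := by
    have := (ℓ w).norm_coe_le_norm x
    rw [Real.norm_eq_abs] at this
    exact abs_le.1 (by linarith)
  simpa [Real.dist_eq, ContinuousMap.sum_apply] using (happrox _ hx).le

theorem ridgeSpan_topologicalClosure_eq_top
    (hℓ : ∀ x y : X, x ≠ y → ∃ w, ℓ w x ≠ ℓ w y) :
    (ridgeSpan σ ℓ).topologicalClosure = ⊤ := by
  set expℓ : E → C(X, ℝ) := fun w => (⟨Real.exp, Real.continuous_exp⟩ : C(ℝ, ℝ)).comp (ℓ w)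
  have hmonoid : (Submonoid.closure (Set.range expℓ) : Set C(X, ℝ)) ⊆ Set.range expℓ := by
    intro f hf
    induction hf using Submonoid.closure_induction with
    | mem f hf => exact hf
    | one => exact ⟨0, by ext; simp [expℓ]⟩
    | mul f g _ _ hf hg =>
      obtain ⟨v, rfl⟩ := hf
      obtain ⟨w, rfl⟩ := hg
      exact ⟨v + w, by ext; simp [expℓ, Real.exp_add]⟩
  set A := Algebra.adjoin ℝ (Set.range expℓ)
  have hA : Subalgebra.toSubmodule A ≤ (ridgeSpan σ ℓ).topologicalClosure := by
    refine (Algebra.adjoin_toSubmodule_le ℝ).2 (hmonoid.trans ?_)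
    rintro _ ⟨w, rfl⟩
    exact comp_mem_topologicalClosure_ridgeSpan σ hσ_top hσ_bot ℓ _ w
  have hsep : A.SeparatesPoints := by
    intro x y hxy
    obtain ⟨w, hw⟩ := hℓ x y hxy
    exact ⟨expℓ w, ⟨expℓ w, Algebra.subset_adjoin ⟨w, rfl⟩, rfl⟩,
      fun h => hw (Real.exp_injective h)⟩
  rw [eq_top_iff]
  intro f _
  have hf : f ∈ A.topologicalClosure := by
    rw [ContinuousMap.subalgebra_topologicalClosure_eq_top_of_separatesPoints A hsep]
    trivial
  rw [← SetLike.mem_coe, Subalgebra.topologicalClosure_coe] at hf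
  exact closure_minimal hA (Submodule.isClosed_topologicalClosure _) hf

theorem exists_sum_sigmoid_near (hℓ : ∀ x y : X, x ≠ y → ∃ w, ℓ w x ≠ ℓ w y) (f : C(X, ℝ))
    {ε : ℝ} (hε : 0 < ε) :
    ∃ (N : ℕ) (α : Fin N → ℝ) (w : Fin N → E) (b : Fin N → ℝ),
      ∀ x, |f x - ∑ i, α i * σ (ℓ (w i) x + b i)| < ε := by
  have hf : f ∈ closure (ridgeSpan σ ℓ : Set C(X, ℝ)) := by
    rw [← Submodule.topologicalClosure_coe,
      ridgeSpan_topologicalClosure_eq_top σ hσ_top hσ_bot ℓ hℓ]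
    trivial
  obtain ⟨g, hg, hfg⟩ := Metric.mem_closure_iff.1 hf ε hε
  obtain ⟨N, α, v, rfl⟩ := Submodule.mem_span_set'.1 hg
  choose q hq using fun i => (v i).2
  refine ⟨N, α, fun i => (q i).1, fun i => (q i).2, fun x => ?_⟩
  calc |f x - ∑ i, α i * σ (ℓ (q i).1 x + (q i).2)|
      = dist (f x) ((∑ i, α i • (v i : C(X, ℝ))) x) := by
        simp [Real.dist_eq, ← hq, ContinuousMap.sum_apply]
    _ ≤ dist f (∑ i, α i • (v i : C(X, ℝ))) := ContinuousMap.dist_apply_le_dist x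
    _ < ε := hfg

end Ridge

def linearFormsOn {ι : Type*} [Fintype ι] (K : Set (ι → ℝ)) : (ι → ℝ) →ₗ[ℝ] C(K, ℝ) where
  toFun w := ⟨fun x => ∑ j, w j * (x : ι → ℝ) j, continuous_finsetSum _ fun j _ =>
    continuous_const.mul ((continuous_apply j).comp continuous_subtype_val)⟩
  map_add' v w := by ext x; simp [add_mul, sum_add_distrib]
  map_smul' c w := by ext x; simp [mul_sum, mul_assoc]

theorem linearFormsOn_separates {ι : Type*} [Fintype ι] (K : Set (ι → ℝ)) (x y : K)
    (hxy : x ≠ y) : ∃ w, linearFormsOn K w x ≠ linearFormsOn K w y := by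
  classical
  obtain ⟨j, hj⟩ := Function.ne_iff.1 (Subtype.coe_ne_coe.2 hxy)
  exact ⟨Pi.single j 1, by simpa [linearFormsOn, Pi.single_apply] using hj⟩

theorem universal_approximation_cybenko_general
    (σ : ℝ → ℝ) (hσ_cont : Continuous σ)
    (hσ_top : Filter.Tendsto σ Filter.atTop (nhds 1))
    (hσ_bot : Filter.Tendsto σ Filter.atBot (nhds 0))
    (n : ℕ)
    (f : (Fin n → ℝ) → ℝ) (hf : ContinuousOn f (Set.Icc 0 1))
    (ε : ℝ) (hε : 0 < ε) :
    ∃ (N : ℕ) (α : Fin N → ℝ) (w : Fin N → Fin n → ℝ) (b : Fin N → ℝ),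
      ∀ x ∈ Set.Icc (0 : Fin n → ℝ) 1,
        |f x - ∑ i : Fin N, α i * σ (∑ j : Fin n, w i j * x j + b i)| < ε := by
  have : CompactSpace (Set.Icc (0 : Fin n → ℝ) 1) := isCompact_iff_compactSpace.1 isCompact_Icc
  obtain ⟨N, α, w, b, happrox⟩ := exists_sum_sigmoid_near ⟨σ, hσ_cont⟩ hσ_top hσ_bot
    (linearFormsOn _) (linearFormsOn_separates _) ⟨_, hf.domRestrict⟩ hε
  exact ⟨N, α, w, b, fun x hx => happrox ⟨x, hx⟩⟩

/-- **Universal approximation theorem (Cybenko).**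
Let `σ : ℝ → ℝ` be a continuous sigmoidal function, i.e. `σ t → 1` as `t → +∞`
and `σ t → 0` as `t → −∞`.  Then for every `n ≥ 1`, every continuous
`f : [0,1]^n → ℝ` and every `ε > 0` there are `N`, coefficients `α i`,
weight vectors `w i ∈ ℝ^n` and biases `b i` such that
`|f x − ∑_{i} α i · σ(⟨w i, x⟩ + b i)| < ε` for every `x ∈ [0,1]^n`
(equivalently, such finite sums are sup-norm dense in `C([0,1]^n)`). -/
theorem universal_approximation_cybenko
    (σ : ℝ → ℝ) (hσ_cont : Continuous σ)
    (hσ_top : Filter.Tendsto σ Filter.atTop (nhds 1))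
    (hσ_bot : Filter.Tendsto σ Filter.atBot (nhds 0))
    (n : ℕ) (hn : 1 ≤ n)
    (f : (Fin n → ℝ) → ℝ) (hf : ContinuousOn f (Set.Icc 0 1))
    (ε : ℝ) (hε : 0 < ε) :
    ∃ (N : ℕ) (α : Fin N → ℝ) (w : Fin N → Fin n → ℝ) (b : Fin N → ℝ),
      ∀ x ∈ Set.Icc (0 : Fin n → ℝ) 1,
        |f x - ∑ i : Fin N, α i * σ (∑ j : Fin n, w i j * x j + b i)| < ε :=
  universal_approximation_cybenko_general σ hσ_cont hσ_top hσ_bot n f hf ε hε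
end

section
/- Partition of unity for B-spline basis functions: for every nondecreasing knot vector t_0 ≤ t_1 ≤ ⋯ ≤ t_m, every degree p ≥ 0 with 2p < m, and every t ∈ [t_p, t_{m−p}), the B-spline basis functions sum to one: Σ_{i=0}^{m−p−1} B_{i,p}(t) = 1. -/
/-- Cox–de Boor B-spline basis functions for knot vector `t`.  Degree `0`:
`B_{i,0}(x) = 1` on `[t i, t (i+1))` and `0` otherwise;  degree `p+1`:
`B_{i,p+1}(x) = (x − t i)/(t (i+p+1) − t i) · B_{i,p}(x)
  + (t (i+p+2) − x)/(t (i+p+2) − t (i+1)) · B_{i+1,p}(x)`,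
where (by the convention `a / 0 = 0` of real division in Lean) any term whose
denominator vanishes is `0`. -/
noncomputable def bspline (t : ℕ → ℝ) : ℕ → ℕ → ℝ → ℝ
  | i, 0 => fun x => if t i ≤ x ∧ x < t (i + 1) then 1 else 0
  | i, (p + 1) => fun x =>
      (x - t i) / (t (i + p + 1) - t i) * bspline t i p x +
      (t (i + p + 2) - x) / (t (i + p + 2) - t (i + 1)) * bspline t (i + 1) p x

/-!
Write `ω_i(x) = (x - t_i) / (t_{i+p+1} - t_i)`. For nondecreasing knots the second Cox–de Boor
coefficient of `B_{i,p+1}` equals `1 - ω_{i+1}` on the support of `B_{i+1,p}`, so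
`B_{i,p+1} = B_{i+1,p} + ω_i B_{i,p} - ω_{i+1} B_{i+1,p}` and the sum over `i` telescopes down to
the sum of the degree `p` functions, whose boundary terms vanish by the support property.
In degree zero the sum telescopes as well, since `B_{i,0} = [t_i ≤ x] - [t_{i+1} ≤ x]`.
The knots beyond `t_m` are irrelevant, so we may replace them by `t_m` and assume `t` monotone.
-/

open Finset

theorem bspline_congr {t t' : ℕ → ℝ} (p : ℕ) :
    ∀ i, (∀ j, i ≤ j → j ≤ i + p + 1 → t j = t' j) → bspline t i p = bspline t' i p := by
  induction p with
  | zero =>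
    intro i h
    funext x
    simp only [bspline, h i le_rfl (by omega), h (i + 1) (by omega) le_rfl]
  | succ p ih =>
    intro i h
    funext x
    simp only [bspline, h i le_rfl (by omega), h (i + p + 1) (by omega) (by omega),
      h (i + p + 2) (by omega) (by omega), h (i + 1) (by omega) (by omega),
      ih i fun j hij hj => h j hij (by omega), ih (i + 1) fun j hij hj => h j (by omega) (by omega)]

section Monotone

variable {t : ℕ → ℝ} (ht : Monotone t) {x : ℝ}
include ht

theorem bspline_eq_zero_of_lt (p : ℕ) : ∀ i, x < t i → bspline t i p x = 0 := by
  induction p with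
  | zero =>
    intro i hx
    simp [bspline, not_le.2 hx]
  | succ p ih =>
    intro i hx
    simp only [bspline, ih i hx, ih (i + 1) (hx.trans_le (ht (Nat.le_succ i))), mul_zero,
      add_zero]

theorem bspline_eq_zero_of_le (p : ℕ) : ∀ i, t (i + p + 1) ≤ x → bspline t i p x = 0 := by
  induction p with
  | zero =>
    intro i hx
    simp [bspline, not_lt.2 hx]
  | succ p ih =>
    intro i hx
    simp only [bspline, ih i ((ht (by omega)).trans hx),
      ih (i + 1) (by rwa [show i + 1 + p + 1 = i + (p + 1) + 1 by omega]), mul_zero, add_zero]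

theorem bspline_eq_zero_of_knot_eq (p i : ℕ) (h : t (i + p + 1) = t i) :
    bspline t i p x = 0 := by
  rcases lt_or_ge x (t i) with hx | hx
  · exact bspline_eq_zero_of_lt ht p i hx
  · exact bspline_eq_zero_of_le ht p i (h ▸ hx)

theorem bspline_zero_eq_sub (i : ℕ) :
    bspline t i 0 x =
      (if t i ≤ x then 1 else 0) - (if t (i + 1) ≤ x then 1 else 0) := by
  have hi : t i ≤ t (i + 1) := ht (Nat.le_succ i)
  by_cases h : t (i + 1) ≤ x
  · simp [bspline, h, hi.trans h]
  · simp [bspline, h, not_le.1 h]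

theorem bspline_succ_eq (p i : ℕ) :
    bspline t i (p + 1) x = bspline t (i + 1) p x +
      ((x - t i) / (t (i + p + 1) - t i) * bspline t i p x -
        (x - t (i + 1)) / (t (i + 1 + p + 1) - t (i + 1)) * bspline t (i + 1) p x) := by
  have hidx : i + 1 + p + 1 = i + p + 2 := by omega
  -- the two coefficients of `B_{i+1,p}` add up to one, unless the knots are equal and it vanishes
  have hcompl : ((x - t (i + 1)) / (t (i + p + 2) - t (i + 1)) +
      (t (i + p + 2) - x) / (t (i + p + 2) - t (i + 1))) * bspline t (i + 1) p x =
      bspline t (i + 1) p x := by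
    by_cases hd : t (i + p + 2) - t (i + 1) = 0
    · rw [bspline_eq_zero_of_knot_eq ht p (i + 1) (by rw [hidx]; linarith), mul_zero]
    · rw [← add_div, sub_add_sub_cancel', div_self hd, one_mul]
  rw [hidx, bspline]
  linear_combination hcompl

theorem sum_bspline_succ (p n : ℕ) :
    ∑ i ∈ range n, bspline t i (p + 1) x = ∑ i ∈ range (n + 1), bspline t i p x -
      bspline t 0 p x + ((x - t 0) / (t (p + 1) - t 0) * bspline t 0 p x -
        (x - t n) / (t (n + p + 1) - t n) * bspline t n p x) := by
  simp only [bspline_succ_eq ht, sum_add_distrib,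
    sum_range_sub' (fun i => (x - t i) / (t (i + p + 1) - t i) * bspline t i p x),
    sum_range_succ' (fun i => bspline t i p x), zero_add]
  ring

theorem sum_bspline_eq_one (p : ℕ) :
    ∀ n, t p ≤ x → x < t n → ∑ i ∈ range n, bspline t i p x = 1 := by
  induction p with
  | zero =>
    intro n hx₀ hxn
    simp only [bspline_zero_eq_sub ht, sum_range_sub' (fun i => if t i ≤ x then (1 : ℝ) else 0),
      if_pos hx₀, if_neg (not_le.2 hxn), sub_zero]
  | succ p ih =>
    intro n hx₀ hxn
    have hfirst : bspline t 0 p x = 0 := bspline_eq_zero_of_le ht p 0 (by rwa [zero_add])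
    have hlast : bspline t n p x = 0 := bspline_eq_zero_of_lt ht p n hxn
    rw [sum_bspline_succ ht, hfirst, hlast, ih (n + 1) ((ht p.le_succ).trans hx₀)
      (hxn.trans_le (ht n.le_succ))]
    ring

end Monotone

/-- **Partition of unity for B-spline basis functions:** for every nondecreasing
knot vector `t 0 ≤ t 1 ≤ ⋯ ≤ t m`, every degree `p` with `2p < m` and every
`x ∈ [t p, t (m − p))`, the basis functions sum to one:
`∑_{i=0}^{m−p−1} B_{i,p}(x) = 1`. -/
theorem bspline_partition_of_unity (m : ℕ) (t : ℕ → ℝ)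
    (ht : ∀ j, j < m → t j ≤ t (j + 1))
    (p : ℕ) (hpm : 2 * p < m) (x : ℝ) (hx : t p ≤ x ∧ x < t (m - p)) :
    ∑ i ∈ Finset.range (m - p), bspline t i p x = 1 := by
  set s : ℕ → ℝ := fun j => t (min j m) with hs
  have hs_mono : Monotone s := monotone_nat_of_le_succ fun j => by
    rcases lt_or_ge j m with hj | hj
    · simpa [hs, hj.le, Nat.succ_le_of_lt hj] using ht j hj
    · simp [hs, hj, hj.trans j.le_succ]
  have hst : ∀ j ≤ m, s j = t j := fun j hj => by simp [hs, hj]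
  calc ∑ i ∈ range (m - p), bspline t i p x
      = ∑ i ∈ range (m - p), bspline s i p x := sum_congr rfl fun i hi => by
        rw [bspline_congr p i fun j _ hj => (hst j (by rw [mem_range] at hi; omega)).symm]
    _ = 1 := sum_bspline_eq_one hs_mono p (m - p)
        (by rw [hst p (by omega)]; exact hx.1) (by rw [hst (m - p) (by omega)]; exact hx.2)
end

section
/- Smoothness of B-splines at simple knots: for every strictly increasing knot vector t_0 < t_1 < ⋯ < t_m, every degree p ≥ 1, and every admissible index i (with i + p + 1 ≤ m), the Cox–de Boor B-spline basis function B_{i,p} is (p−1)-times continuously differentiable on the open interval (t_0, t_m). -/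
open Set Filter Topology

section Gluing

variable {E : Type*} [NormedAddCommGroup E] [NormedSpace ℝ E]

theorem hasDerivAt_of_eventually_hasDerivAt {f g : ℝ → E} {x : ℝ}
    (hfg : ∀ᶠ y in 𝓝[≠] x, HasDerivAt f (g y) y) (hf : ContinuousAt f x)
    (hg : ContinuousAt g x) : HasDerivAt f (g x) x := by
  have hdiff : DifferentiableOn ℝ f {y | HasDerivAt f (g y) y} :=
    fun y hy => hy.differentiableAt.differentiableWithinAt
  have hlim : Tendsto (deriv f) (𝓝[≠] x) (𝓝 (g x)) :=
    (hg.tendsto.mono_left nhdsWithin_le_nhds).congr' (hfg.mono fun y hy => hy.deriv.symm)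
  have hleft := hasDerivWithinAt_Iic_of_tendsto_deriv hdiff hf.continuousWithinAt
    (nhdsLT_le_nhdsNE x hfg) (hlim.mono_left (nhdsLT_le_nhdsNE x))
  have hright := hasDerivWithinAt_Ici_of_tendsto_deriv hdiff hf.continuousWithinAt
    (nhdsGT_le_nhdsNE x hfg) (hlim.mono_left (nhdsGT_le_nhdsNE x))
  simpa using hleft.union hright

theorem hasDerivAt_of_hasDerivAt_of_notMem_finite {f g : ℝ → E} {S : Set ℝ} (hS : S.Finite)
    (hfg : ∀ y ∉ S, HasDerivAt f (g y) y) (hf : Continuous f) (hg : Continuous g) (x : ℝ) :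
    HasDerivAt f (g x) x :=
  hasDerivAt_of_eventually_hasDerivAt
    (mem_of_superset (nhdsNE_of_nhdsNE_sdiff_finite univ_mem hS.to_subtype)
      fun y hy => hfg y hy.2)
    hf.continuousAt hg.continuousAt

end Gluing

theorem eventually_le_iff_le_of_ne {α : Type*} [TopologicalSpace α] [LinearOrder α]
    [OrderClosedTopology α] {a x : α} (h : x ≠ a) : ∀ᶠ y in 𝓝 x, (a ≤ y ↔ a ≤ x) := by
  rcases h.lt_or_gt with h | h
  · filter_upwards [eventually_lt_nhds h] with y hy using iff_of_false hy.not_ge h.not_ge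
  · filter_upwards [eventually_gt_nhds h] with y hy using iff_of_true hy.le h.le

section BSpline

variable {t : ℕ → ℝ} {m : ℕ}

theorem bspline_zero (t : ℕ → ℝ) (i : ℕ) (x : ℝ) :
    bspline t i 0 x = if t i ≤ x ∧ x < t (i + 1) then 1 else 0 := rfl

theorem bspline_succ (t : ℕ → ℝ) (i p : ℕ) (x : ℝ) :
    bspline t i (p + 1) x =
      (x - t i) / (t (i + p + 1) - t i) * bspline t i p x +
        (t (i + p + 2) - x) / (t (i + p + 2) - t (i + 1)) * bspline t (i + 1) p x := rfl

theorem hasDerivAt_bspline_zero {i : ℕ} {x : ℝ} (hx₀ : x ≠ t i) (hx₁ : x ≠ t (i + 1)) :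
    HasDerivAt (bspline t i 0) 0 x := by
  refine (hasDerivAt_const x (bspline t i 0 x)).congr_of_eventuallyEq ?_
  filter_upwards [eventually_le_iff_le_of_ne hx₀, eventually_le_iff_le_of_ne hx₁]
    with y hy₀ hy₁
  simp only [bspline_zero, ← not_le, hy₀, hy₁]

theorem HasDerivAt.bspline_succ {i p : ℕ} {x d₀ d₁ : ℝ}
    (h₀ : HasDerivAt (bspline t i p) d₀ x) (h₁ : HasDerivAt (bspline t (i + 1) p) d₁ x) :
    HasDerivAt (bspline t i (p + 1))
      (bspline t i p x / (t (i + p + 1) - t i) + (x - t i) / (t (i + p + 1) - t i) * d₀ -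
        bspline t (i + 1) p x / (t (i + p + 2) - t (i + 1)) +
          (t (i + p + 2) - x) / (t (i + p + 2) - t (i + 1)) * d₁) x := by
  have h := ((((hasDerivAt_id' x).sub_const (t i)).div_const (t (i + p + 1) - t i)).mul h₀).add
    ((((hasDerivAt_id' x).const_sub (t (i + p + 2))).div_const
      (t (i + p + 2) - t (i + 1))).mul h₁)
  exact h.congr_deriv (by ring)

theorem bspline_one_eq_hat (ht : StrictMonoOn t (Iic m)) {i : ℕ} (hi : i + 2 ≤ m) :
    bspline t i 1 = fun x =>
      max 0 (min ((x - t i) / (t (i + 1) - t i)) ((t (i + 2) - x) / (t (i + 2) - t (i + 1)))) := by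
  have h₀ : t i < t (i + 1) := ht (mem_Iic.2 (by omega)) (mem_Iic.2 (by omega)) (by omega)
  have h₁ : t (i + 1) < t (i + 2) := ht (mem_Iic.2 (by omega)) (mem_Iic.2 hi) (by omega)
  have d₀ := sub_pos.2 h₀
  have d₁ := sub_pos.2 h₁
  funext x
  simp only [bspline_succ, bspline_zero, Nat.add_zero]
  rcases lt_or_ge x (t i) with hx | hx
  · have hu : (x - t i) / (t (i + 1) - t i) < 0 := div_neg_of_neg_of_pos (by linarith) d₀
    rw [if_neg (by grind), if_neg (by grind), max_eq_left ((min_le_left _ _).trans hu.le)]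
    ring
  rcases lt_or_ge x (t (i + 1)) with hx₁ | hx₁
  · have huv : (x - t i) / (t (i + 1) - t i) ≤ (t (i + 2) - x) / (t (i + 2) - t (i + 1)) := by
      rw [div_le_div_iff₀ d₀ d₁]; nlinarith
    rw [if_pos ⟨hx, hx₁⟩, if_neg (by grind), min_eq_left huv,
      max_eq_right (div_nonneg (by linarith) d₀.le)]
    ring
  rcases lt_or_ge x (t (i + 2)) with hx₂ | hx₂
  · have hvu : (t (i + 2) - x) / (t (i + 2) - t (i + 1)) ≤ (x - t i) / (t (i + 1) - t i) := by
      rw [div_le_div_iff₀ d₁ d₀]; nlinarith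
    rw [if_neg (by grind), if_pos ⟨hx₁, hx₂⟩, min_eq_right hvu,
      max_eq_right (div_nonneg (by linarith) d₁.le)]
    ring
  · have hv : (t (i + 2) - x) / (t (i + 2) - t (i + 1)) ≤ 0 :=
      div_nonpos_of_nonpos_of_nonneg (by linarith) d₁.le
    rw [if_neg (by grind), if_neg (by grind), max_eq_left ((min_le_right _ _).trans hv)]
    ring

theorem continuous_bspline (ht : StrictMonoOn t (Iic m)) {p : ℕ} (hp : 1 ≤ p) :
    ∀ {i : ℕ}, i + p + 1 ≤ m → Continuous (bspline t i p) := by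
  induction p, hp using Nat.le_induction with
  | base =>
    intro i hi
    rw [bspline_one_eq_hat ht hi]
    fun_prop
  | succ p _ ih =>
    intro i hi
    have h₀ := ih (i := i) (by omega)
    have h₁ := ih (i := i + 1) (by omega)
    simp only [funext (bspline_succ t i p)]
    fun_prop

/-- The derivative of `bspline t i (p + 1)` (note the shift of the degree). -/
noncomputable def bsplineDeriv (t : ℕ → ℝ) (i p : ℕ) (x : ℝ) : ℝ :=
  ((p : ℝ) + 1) / (t (i + p + 1) - t i) * bspline t i p x -
    ((p : ℝ) + 1) / (t (i + p + 2) - t (i + 1)) * bspline t (i + 1) p x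

theorem hasDerivAt_bspline_succ_of_notMem (ht : StrictMonoOn t (Iic m)) {p : ℕ} :
    ∀ {i : ℕ}, i + p + 2 ≤ m → ∀ {x : ℝ}, x ∉ t '' Iic m →
      HasDerivAt (bspline t i (p + 1)) (bsplineDeriv t i p x) x := by
  have hx_ne {x : ℝ} (hx : x ∉ t '' Iic m) {j : ℕ} (hj : j ≤ m) : x ≠ t j :=
    fun h => hx ⟨j, hj, h.symm⟩
  induction p with
  | zero =>
    intro i hi x hx
    have h₀ := hasDerivAt_bspline_zero (hx_ne hx (j := i) (by omega)) (hx_ne hx (by omega))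
    have h₁ := hasDerivAt_bspline_zero (hx_ne hx (j := i + 1) (by omega)) (hx_ne hx (by omega))
    refine (h₀.bspline_succ h₁).congr_deriv ?_
    simp only [bsplineDeriv, Nat.cast_zero, add_zero]
    ring
  | succ p ih =>
    intro i hi x hx
    have h₀ := ih (i := i) (by omega) hx
    have h₁ := ih (i := i + 1) (by omega) hx
    have hne {j k : ℕ} (hjk : j < k) (hk : k ≤ m) : t k - t j ≠ 0 :=
      sub_ne_zero.2 (ht (mem_Iic.2 (by omega)) (mem_Iic.2 hk) hjk).ne'
    refine (h₀.bspline_succ h₁).congr_deriv ?_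
    simp only [bsplineDeriv, bspline_succ, show i + (p + 1) + 1 = i + p + 2 by omega,
      show i + (p + 1) + 2 = i + p + 3 by omega, show i + 1 + p + 1 = i + p + 2 by omega,
      show i + 1 + p + 2 = i + p + 3 by omega, show i + 1 + 1 = i + 2 by omega]
    field_simp [hne (j := i) (k := i + p + 1) (by omega) (by omega),
      hne (j := i) (k := i + p + 2) (by omega) (by omega),
      hne (j := i + 1) (k := i + p + 2) (by omega) (by omega),
      hne (j := i + 1) (k := i + p + 3) (by omega) (by omega),
      hne (j := i + 2) (k := i + p + 3) (by omega) (by omega)]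
    push_cast
    ring

theorem continuous_bsplineDeriv (ht : StrictMonoOn t (Iic m)) {p i : ℕ} (hp : 1 ≤ p)
    (hi : i + p + 2 ≤ m) : Continuous (bsplineDeriv t i p) := by
  have h₀ := continuous_bspline ht hp (i := i) (by omega)
  have h₁ := continuous_bspline ht hp (i := i + 1) (by omega)
  unfold bsplineDeriv
  fun_prop

theorem hasDerivAt_bspline_succ (ht : StrictMonoOn t (Iic m)) {p i : ℕ} (hp : 1 ≤ p)
    (hi : i + p + 2 ≤ m) (x : ℝ) :
    HasDerivAt (bspline t i (p + 1)) (bsplineDeriv t i p x) x :=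
  hasDerivAt_of_hasDerivAt_of_notMem_finite ((finite_Iic m).image t)
    (fun _ hy => hasDerivAt_bspline_succ_of_notMem ht hi hy)
    (continuous_bspline ht (by omega) (by omega)) (continuous_bsplineDeriv ht hp hi) x

theorem contDiff_bspline (ht : StrictMonoOn t (Iic m)) {n : ℕ} :
    ∀ {p i : ℕ}, n < p → i + p + 1 ≤ m → ContDiff ℝ n (bspline t i p) := by
  induction n with
  | zero =>
    intro p i hp hi
    simpa using continuous_bspline ht hp hi
  | succ n ih =>
    intro p i hp hi
    obtain ⟨p, rfl⟩ : ∃ q, p = q + 1 := ⟨p - 1, by omega⟩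
    have hderiv := hasDerivAt_bspline_succ ht (i := i) (p := p) (by omega) (by omega)
    rw [Nat.cast_add_one, contDiff_succ_iff_deriv, funext fun x => (hderiv x).deriv]
    refine ⟨fun x => (hderiv x).differentiableAt, by simp, ?_⟩
    exact (contDiff_const.mul (ih (by omega) (by omega))).sub
      (contDiff_const.mul (ih (by omega) (by omega)))

end BSpline

/-- **Smoothness of B-splines at simple knots:** for every strictly increasing
knot vector `t 0 < t 1 < ⋯ < t m`, every degree `p ≥ 1` and every admissible
index `i` (with `i + p + 1 ≤ m`), the basis function `B_{i,p}` is `(p−1)`-times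
continuously differentiable on the open interval `(t 0, t m)`. -/
theorem bspline_smoothness (m : ℕ) (t : ℕ → ℝ)
    (ht : ∀ j, j < m → t j < t (j + 1))
    (p i : ℕ) (hp : 1 ≤ p) (hip : i + p + 1 ≤ m) :
    ContDiffOn ℝ (p - 1 : ℕ) (bspline t i p) (Set.Ioo (t 0) (t m)) :=
  (contDiff_bspline (strictMonoOn_Iic_of_lt_succ fun j hj => by simpa using ht j hj)
    (by omega) hip).contDiffOn
end

section
/- Existence and uniqueness of the clamped cubic spline interpolant: let n ≥ 1, let x_0 < x_1 < ⋯ < x_n be real numbers, let y_0, y_1, …, y_n ∈ ℝ, and let k_0, k_n ∈ ℝ. Then there exists a unique function S : [x_0, x_n] → ℝ such that (i) S is twice continuously differentiable on [x_0, x_n], (ii) on each subinterval [x_{i−1}, x_i], 1 ≤ i ≤ n, S agrees with a polynomial of degree at most 3, (iii) S(x_i) = y_i for all 0 ≤ i ≤ n, and (iv) S′(x_0) = k_0 and S′(x_n) = k_n. -/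
open Set

/-- `S` is a cubic spline interpolant of the data `(x i, y i)`, `0 ≤ i ≤ n`:
it is twice continuously differentiable on `[x 0, x n]` (one-sided derivatives at
the endpoints), agrees with a polynomial of degree at most `3` on each subinterval
`[x (i-1), x i]`, and interpolates the data. -/
def IsCubicSplineInterpolant (n : ℕ) (x y : ℕ → ℝ) (S : ℝ → ℝ) : Prop :=
  ContDiffOn ℝ 2 S (Icc (x 0) (x n)) ∧
  (∀ i : ℕ, 1 ≤ i → i ≤ n → ∃ P : Polynomial ℝ, P.degree ≤ 3 ∧
    ∀ u ∈ Icc (x (i - 1)) (x i), S u = P.eval u) ∧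
  (∀ i : ℕ, i ≤ n → S (x i) = y i)

/-!
A cubic on `[a, b]` is determined by its values and slopes at `a` and `b` (cubic Hermite
interpolation), so a `C¹` piecewise cubic interpolant of the data is the same thing as a choice of
slopes `m i` at the nodes. Continuity of `S''` at the interior nodes is a tridiagonal linear system
for the slopes, and the clamped conditions prescribe `m 0` and `m n`. With `hᵢ` the lengths of the
subintervals, the diagonal coefficient `2 (1/hᵢ + 1/hᵢ₊₁)` dominates the off-diagonal ones `1/hᵢ`,
`1/hᵢ₊₁`, so by the maximum principle the homogeneous system has only the trivial solution; hence
the slopes, and with them the spline, exist and are unique.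
-/

open Polynomial

namespace Polynomial

variable {K : Type*} [Field K]

noncomputable def taylorCubic (a p q r s : K) : K[X] :=
  C p + C q * (X - C a) + C r * (X - C a) ^ 2 + C s * (X - C a) ^ 3

section TaylorCubic

variable (a p q r s u : K)

theorem eval_taylorCubic :
    (taylorCubic a p q r s).eval u = p + q * (u - a) + r * (u - a) ^ 2 + s * (u - a) ^ 3 := by
  simp [taylorCubic]

theorem derivative_taylorCubic :
    (taylorCubic a p q r s).derivative = taylorCubic a q (2 * r) (3 * s) 0 := by
  simp only [taylorCubic, derivative_add, derivative_C_mul, derivative_C, derivative_X_sub_C,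
    derivative_X_sub_C_pow, C_mul, C_0, Nat.cast_ofNat, Nat.add_one_sub_one]
  ring

theorem degree_taylorCubic_le : (taylorCubic a p q r s).degree ≤ 3 := by
  unfold taylorCubic
  compute_degree

end TaylorCubic

-- The top two coefficients are the solution of the linear system imposing value `yb` and slope
-- `mb` at `b`.
noncomputable def cubicHermite (a b ya yb ma mb : K) : K[X] :=
  taylorCubic a ya ma ((3 * (yb - ya) * (b - a)⁻¹ - 2 * ma - mb) * (b - a)⁻¹)
    ((ma + mb - 2 * (yb - ya) * (b - a)⁻¹) * (b - a)⁻¹ ^ 2)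

variable {a b : K} (ya yb ma mb : K)

theorem eval_cubicHermite_left : (cubicHermite a b ya yb ma mb).eval a = ya := by
  simp [cubicHermite, eval_taylorCubic]

theorem eval_derivative_cubicHermite_left :
    (cubicHermite a b ya yb ma mb).derivative.eval a = ma := by
  simp [cubicHermite, derivative_taylorCubic, eval_taylorCubic]

theorem eval_derivative_derivative_cubicHermite_left :
    (cubicHermite a b ya yb ma mb).derivative.derivative.eval a =
      2 * (3 * (yb - ya) * (b - a)⁻¹ - 2 * ma - mb) * (b - a)⁻¹ := by
  rw [cubicHermite, derivative_taylorCubic, derivative_taylorCubic, eval_taylorCubic]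
  ring

section

variable {ya yb ma mb} (hab : a ≠ b)
include hab

theorem eval_cubicHermite_right : (cubicHermite a b ya yb ma mb).eval b = yb := by
  rw [cubicHermite, eval_taylorCubic]
  field_simp [sub_ne_zero.2 hab.symm]
  ring

theorem eval_derivative_cubicHermite_right :
    (cubicHermite a b ya yb ma mb).derivative.eval b = mb := by
  rw [cubicHermite, derivative_taylorCubic, eval_taylorCubic]
  field_simp [sub_ne_zero.2 hab.symm]
  ring

theorem eval_derivative_derivative_cubicHermite_right :
    (cubicHermite a b ya yb ma mb).derivative.derivative.eval b =
      2 * (ma + 2 * mb - 3 * (yb - ya) * (b - a)⁻¹) * (b - a)⁻¹ := by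
  rw [cubicHermite, derivative_taylorCubic, derivative_taylorCubic, eval_taylorCubic]
  field_simp [sub_ne_zero.2 hab.symm]
  ring

end

theorem X_sub_C_sq_dvd_of_isRoot_derivative {R : Type*} [CommRing R] [IsDomain R] {p : R[X]}
    {t : R} (h₀ : p.IsRoot t) (h₁ : p.derivative.IsRoot t) : (X - C t) ^ 2 ∣ p := by
  rcases eq_or_ne p 0 with rfl | hp
  · exact dvd_zero _
  · exact (le_rootMultiplicity_iff hp).1 ((one_lt_rootMultiplicity_iff_isRoot hp).2 ⟨h₀, h₁⟩)

theorem eq_of_degree_le_three_of_eval_derivative_eq {P Q : K[X]} (hP : P.degree ≤ 3)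
    (hQ : Q.degree ≤ 3) {a b : K} (hab : a ≠ b) (ha : P.eval a = Q.eval a)
    (hb : P.eval b = Q.eval b) (ha' : P.derivative.eval a = Q.derivative.eval a)
    (hb' : P.derivative.eval b = Q.derivative.eval b) : P = Q := by
  have hdvd : (X - C a) ^ 2 * (X - C b) ^ 2 ∣ P - Q := by
    refine (isCoprime_X_sub_C_of_isUnit_sub (sub_ne_zero.2 hab).isUnit).pow.mul_dvd ?_ ?_ <;>
      apply X_sub_C_sq_dvd_of_isRoot_derivative <;> simp [*]
  have hdeg : (P - Q).degree < ((X - C a) ^ 2 * (X - C b) ^ 2).degree := by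
    rw [degree_mul, degree_pow, degree_pow, degree_X_sub_C, degree_X_sub_C]
    exact (degree_sub_le P Q).trans_lt ((max_le hP hQ).trans_lt (by decide))
  exact sub_eq_zero.1 (eq_zero_of_dvd_of_degree_lt hdvd hdeg)

end Polynomial

section Tridiagonal

open Fin.NatCast

variable (a b c : ℕ → ℝ)

-- Equation `i` is centred at `w (i + 1)`, which keeps natural-number subtraction out of it.
def tridiag (w : ℕ → ℝ) (i : ℕ) : ℝ := a i * w i + b i * w (i + 1) + c i * w (i + 2)

variable {a b c} {n : ℕ}

theorem eqOn_of_tridiag_eq (hdom : ∀ i, i + 2 ≤ n → |a i| + |c i| < |b i|) {w w' : ℕ → ℝ}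
    (h₀ : w 0 = w' 0) (hₙ : w n = w' n)
    (h : ∀ i, i + 2 ≤ n → tridiag a b c w i = tridiag a b c w' i) : EqOn w w' (Iic n) := by
  -- At an index where `|w - w'|` is maximal, diagonal dominance forces it to vanish.
  set d := w - w'
  obtain ⟨j, hj, hmax⟩ := Finset.exists_max_image (Finset.range (n + 1)) (fun k => |d k|)
    ⟨0, by simp⟩
  have hmax' : ∀ k ≤ n, |d k| ≤ |d j| := fun k hk =>
    hmax k (by simpa [Nat.lt_succ_iff] using hk)
  suffices hj0 : |d j| = 0 by
    intro k hk
    have := hmax' k hk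
    rw [hj0] at this
    exact sub_eq_zero.1 (abs_nonpos_iff.1 this)
  rw [Finset.mem_range] at hj
  rcases Nat.eq_zero_or_pos j with rfl | hj₀
  · simp [d, h₀]
  rcases eq_or_lt_of_le (Nat.lt_succ_iff.1 hj) with rfl | hjn
  · simp [d, hₙ]
  obtain ⟨i, rfl⟩ : ∃ i, j = i + 1 := ⟨j - 1, by omega⟩
  have hi : i + 2 ≤ n := by omega
  have hd : b i * d (i + 1) = -(a i * d i + c i * d (i + 2)) := by
    have := h i hi
    simp only [tridiag] at this
    simp only [d, Pi.sub_apply]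
    linarith
  have hbound : |b i| * |d (i + 1)| ≤ (|a i| + |c i|) * |d (i + 1)| := by
    rw [← abs_mul, hd, abs_neg, add_mul]
    refine (abs_add_le _ _).trans (add_le_add ?_ ?_) <;> rw [abs_mul] <;>
      exact mul_le_mul_of_nonneg_left (hmax' _ (by omega)) (abs_nonneg _)
  nlinarith [hdom i hi, abs_nonneg (d (i + 1))]

-- Rows `0` and `n` read off the boundary values; row `j` is the equation centred at `j`.
variable (a b c n) in
noncomputable def tridiagBVP : (Fin (n + 1) → ℝ) →ₗ[ℝ] Fin (n + 1) → ℝ where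
  toFun v j :=
    if (j : ℕ) = 0 ∨ (j : ℕ) = n then v j else tridiag a b c (fun k => v (k : Fin (n + 1))) (j - 1)
  map_add' v v' := by
    ext j
    simp only [Pi.add_apply, tridiag]
    split_ifs <;> ring
  map_smul' r v := by
    ext j
    simp only [Pi.smul_apply, smul_eq_mul, RingHom.id_apply, tridiag]
    split_ifs <;> ring

theorem exists_tridiag_eq (hn : 0 < n) (hdom : ∀ i, i + 2 ≤ n → |a i| + |c i| < |b i|)
    (r : ℕ → ℝ) (α β : ℝ) :
    ∃ w : ℕ → ℝ, w 0 = α ∧ w n = β ∧ ∀ i, i + 2 ≤ n → tridiag a b c w i = r i := by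
  have hinj : Function.Injective (tridiagBVP a b c n) := by
    rw [← LinearMap.ker_eq_bot, LinearMap.ker_eq_bot']
    intro v hv
    have hv' : ∀ j, tridiagBVP a b c n v j = 0 := fun j => congrFun hv j
    have := eqOn_of_tridiag_eq (w := fun k => v (k : Fin (n + 1))) (w' := 0) hdom ?_ ?_ ?_
    · ext j
      simpa using this (show (j : ℕ) ∈ Iic n from Nat.lt_succ_iff.1 j.2)
    · simpa [tridiagBVP] using hv' 0
    · simpa [tridiagBVP, Fin.natCast_eq_last] using hv' (Fin.last n)
    · intro i hi
      simpa [tridiagBVP, tridiag, show i + 1 ≠ n by omega, -Fin.val_eq_zero_iff]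
        using hv' ⟨i + 1, by omega⟩
  obtain ⟨v, hv⟩ := LinearMap.injective_iff_surjective.1 hinj
    fun j => if (j : ℕ) = 0 then α else if (j : ℕ) = n then β else r (j - 1)
  have hv' : ∀ j, tridiagBVP a b c n v j = _ := fun j => congrFun hv j
  refine ⟨fun k => v (k : Fin (n + 1)), ?_, ?_, fun i hi => ?_⟩
  · simpa [tridiagBVP] using hv' 0
  · simpa [tridiagBVP, Fin.natCast_eq_last, hn.ne'] using hv' (Fin.last n)
  · simpa [tridiagBVP, show i + 1 ≠ n by omega, -Fin.val_eq_zero_iff]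
      using hv' ⟨i + 1, by omega⟩

end Tridiagonal

section Calculus

variable {𝕜 F : Type*} [NontriviallyNormedField 𝕜] [NormedAddCommGroup F] [NormedSpace 𝕜 F]

theorem hasDerivWithinAt_biUnion {ι : Type*} {I : Finset ι} {t : ι → Set 𝕜}
    (ht : ∀ i ∈ I, IsClosed (t i)) {f : 𝕜 → F} {g : ι → 𝕜 → F} {f' : F} {u : 𝕜}
    (hfg : ∀ i ∈ I, EqOn f (g i) (t i)) (hg : ∀ i ∈ I, u ∈ t i → HasDerivAt (g i) f' u) :
    HasDerivWithinAt f f' (⋃ i ∈ I, t i) u := by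
  classical
  induction I using Finset.induction_on with
  | empty => exact HasFDerivWithinAt.of_notMem_closure (by simp)
  | insert j I _ ih =>
    rw [Finset.forall_mem_insert] at ht hfg hg
    rw [Finset.set_biUnion_insert]
    refine HasDerivWithinAt.union ?_ (ih ht.2 hfg.2 hg.2)
    by_cases hu : u ∈ t j
    · exact (hg.1 hu).hasDerivWithinAt.congr hfg.1 (hfg.1 hu)
    · exact HasFDerivWithinAt.of_notMem_closure (by rwa [ht.1.closure_eq])

theorem continuousWithinAt_biUnion {X Y : Type*} [TopologicalSpace X] [TopologicalSpace Y]
    {ι : Type*} {I : Finset ι} {t : ι → Set X}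
    (ht : ∀ i ∈ I, IsClosed (t i)) {f : X → Y} {g : ι → X → Y} {u : X}
    (hfg : ∀ i ∈ I, EqOn f (g i) (t i)) (hg : ∀ i ∈ I, u ∈ t i → ContinuousAt (g i) u) :
    ContinuousWithinAt f (⋃ i ∈ I, t i) u := by
  classical
  induction I using Finset.induction_on with
  | empty => exact continuousWithinAt_of_notMem_closure (by simp)
  | insert j I _ ih =>
    rw [Finset.forall_mem_insert] at ht hfg hg
    rw [Finset.set_biUnion_insert]
    refine ContinuousWithinAt.union ?_ (ih ht.2 hfg.2 hg.2)
    by_cases hu : u ∈ t j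
    · exact (hg.1 hu).continuousWithinAt.congr hfg.1 (hfg.1 hu)
    · exact continuousWithinAt_of_notMem_closure (by rwa [ht.1.closure_eq])

theorem contDiffOn_two_of_hasDerivWithinAt {f f₁ f₂ : 𝕜 → F} {s : Set 𝕜}
    (hs : UniqueDiffOn 𝕜 s) (hf : ∀ u ∈ s, HasDerivWithinAt f (f₁ u) s u)
    (hf₁ : ∀ u ∈ s, HasDerivWithinAt f₁ (f₂ u) s u) (hf₂ : ContinuousOn f₂ s) :
    ContDiffOn 𝕜 2 f s := by
  have h₁ : ContDiffOn 𝕜 1 f₁ s :=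
    (contDiffOn_one_iff_derivWithin hs).2 ⟨fun u hu => (hf₁ u hu).differentiableWithinAt,
      hf₂.congr fun u hu => (hf₁ u hu).derivWithin (hs u hu)⟩
  rw [show (2 : WithTop ℕ∞) = 1 + 1 from rfl, contDiffOn_succ_iff_derivWithin hs]
  exact ⟨fun u hu => (hf u hu).differentiableWithinAt, by simp,
    h₁.congr fun u hu => (hf u hu).derivWithin (hs u hu)⟩

theorem derivWithin_eq_of_eqOn {f g : 𝕜 → F} {s t : Set 𝕜} {u : 𝕜} {g' : F} (hts : t ⊆ s)
    (ht : UniqueDiffWithinAt 𝕜 t u) (hu : u ∈ t) (hf : DifferentiableWithinAt 𝕜 f s u)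
    (hfg : EqOn f g t) (hg : HasDerivAt g g' u) : derivWithin f s u = g' :=
  ht.eq_deriv _ (hf.hasDerivWithinAt.mono hts) (hg.hasDerivWithinAt.congr hfg (hfg hu))

end Calculus

theorem Icc_subset_biUnion_Icc {X : Type*} [LinearOrder X] {N : ℕ} (hN : 0 < N) (a : ℕ → X) :
    Icc (a 0) (a N) ⊆ ⋃ i ∈ Finset.range N, Icc (a i) (a (i + 1)) := by
  induction N, hN using Nat.le_induction with
  | base => simp
  | succ N _ ih => calc
    _ ⊆ Icc (a 0) (a N) ∪ Icc (a N) (a (N + 1)) := Icc_subset_Icc_union_Icc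
    _ ⊆ _ := by simpa [Finset.range_add_one] using
                  union_subset_union_right (Icc (a N) (a (N + 1))) ih

section PiecewisePolynomial

variable {n : ℕ} {x : ℕ → ℝ}

def AgreeAtNodes (n : ℕ) (x : ℕ → ℝ) (P : ℕ → ℝ[X]) : Prop :=
  ∀ i, i + 1 < n → (P i).eval (x (i + 1)) = (P (i + 1)).eval (x (i + 1))

def HasNodeValues (n : ℕ) (x : ℕ → ℝ) (P : ℕ → ℝ[X]) (v : ℕ → ℝ) : Prop :=
  ∀ i < n, (P i).eval (x i) = v i ∧ (P i).eval (x (i + 1)) = v (i + 1)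

-- Off `[x 0, x n]` the value is a junk `0`.
open Classical in
noncomputable def piecewisePoly (n : ℕ) (x : ℕ → ℝ) (P : ℕ → ℝ[X]) (u : ℝ) : ℝ :=
  if h : ∃ i < n, u ∈ Icc (x i) (x (i + 1)) then (P h.choose).eval u else 0

variable {P : ℕ → ℝ[X]} {i : ℕ} {u : ℝ}

theorem node_mem_Icc (hx : ∀ i < n, x i < x (i + 1)) (hi : i ≤ n) : x i ∈ Icc (x 0) (x n) :=
  have hmono := (strictMonoOn_Iic_of_lt_succ hx).monotoneOn
  ⟨hmono (by simp) (by simpa using hi) (Nat.zero_le i), hmono (by simpa using hi) (by simp) hi⟩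

theorem Icc_succ_subset_Icc (hx : ∀ i < n, x i < x (i + 1)) (hi : i < n) :
    Icc (x i) (x (i + 1)) ⊆ Icc (x 0) (x n) :=
  Icc_subset_Icc (node_mem_Icc hx hi.le).1 (node_mem_Icc hx hi).2

theorem eq_succ_of_mem_Icc_of_mem_Icc (hx : ∀ i < n, x i < x (i + 1)) {j : ℕ} (hij : i < j)
    (hj : j < n) (hui : u ∈ Icc (x i) (x (i + 1))) (huj : u ∈ Icc (x j) (x (j + 1))) :
    j = i + 1 ∧ u = x (i + 1) := by
  have hji : j ≤ i + 1 := ((strictMonoOn_Iic_of_lt_succ hx).le_iff_le (by simp; omega)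
    (by simp; omega)).1 (huj.1.trans hui.2)
  obtain rfl : j = i + 1 := by omega
  exact ⟨rfl, le_antisymm hui.2 huj.1⟩

theorem AgreeAtNodes.eval_eq (hx : ∀ i < n, x i < x (i + 1)) (hP : AgreeAtNodes n x P)
    {j : ℕ} (hi : i < n) (hj : j < n) (hui : u ∈ Icc (x i) (x (i + 1)))
    (huj : u ∈ Icc (x j) (x (j + 1))) : (P i).eval u = (P j).eval u := by
  wlog hij : i ≤ j generalizing i j
  · exact (this hj hi huj hui (le_of_not_ge hij)).symm
  rcases hij.eq_or_lt with rfl | hij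
  · rfl
  obtain ⟨rfl, rfl⟩ := eq_succ_of_mem_Icc_of_mem_Icc hx hij hj hui huj
  exact hP i hj

theorem AgreeAtNodes.piecewisePoly_eq (hx : ∀ i < n, x i < x (i + 1))
    (hP : AgreeAtNodes n x P) (hi : i < n) (hu : u ∈ Icc (x i) (x (i + 1))) :
    piecewisePoly n x P u = (P i).eval u := by
  have h : ∃ i < n, u ∈ Icc (x i) (x (i + 1)) := ⟨i, hi, hu⟩
  rw [piecewisePoly, dif_pos h]
  exact hP.eval_eq hx h.choose_spec.1 hi h.choose_spec.2 hu

theorem AgreeAtNodes.hasDerivWithinAt_piecewisePoly (hn : 0 < n) (hx : ∀ i < n, x i < x (i + 1))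
    (hP : AgreeAtNodes n x P) (hP' : AgreeAtNodes n x fun i => (P i).derivative) :
    HasDerivWithinAt (piecewisePoly n x P) (piecewisePoly n x (fun i => (P i).derivative) u)
      (Icc (x 0) (x n)) u := by
  refine (hasDerivWithinAt_biUnion (fun _ _ => isClosed_Icc)
    (fun _ hi _ hv => hP.piecewisePoly_eq hx (Finset.mem_range.1 hi) hv)
    fun i hi hu => ?_).mono (Icc_subset_biUnion_Icc hn x)
  rw [hP'.piecewisePoly_eq hx (Finset.mem_range.1 hi) hu]
  exact (P i).hasDerivAt u

theorem AgreeAtNodes.continuousOn_piecewisePoly (hn : 0 < n) (hx : ∀ i < n, x i < x (i + 1))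
    (hP : AgreeAtNodes n x P) : ContinuousOn (piecewisePoly n x P) (Icc (x 0) (x n)) :=
  fun _ _ => (continuousWithinAt_biUnion (fun _ _ => isClosed_Icc)
    (fun _ hi _ hv => hP.piecewisePoly_eq hx (Finset.mem_range.1 hi) hv)
    fun i _ _ => (P i).continuous.continuousAt).mono (Icc_subset_biUnion_Icc hn x)

theorem HasNodeValues.agreeAtNodes {v : ℕ → ℝ} (hP : HasNodeValues n x P v) :
    AgreeAtNodes n x P :=
  fun i (hi : i + 1 < n) => (hP i (Nat.lt_of_succ_lt hi)).2.trans (hP (i + 1) hi).1.symm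

theorem HasNodeValues.piecewisePoly_node (hn : 0 < n) (hx : ∀ i < n, x i < x (i + 1))
    {v : ℕ → ℝ} (hP : HasNodeValues n x P v) (hi : i ≤ n) : piecewisePoly n x P (x i) = v i := by
  rcases hi.lt_or_eq with hi | rfl
  · rw [hP.agreeAtNodes.piecewisePoly_eq hx hi (left_mem_Icc.2 (hx i hi).le)]
    exact (hP i hi).1
  · obtain ⟨k, rfl⟩ : ∃ k, i = k + 1 := ⟨i - 1, by omega⟩
    rw [hP.agreeAtNodes.piecewisePoly_eq hx (lt_add_one k)
      (right_mem_Icc.2 (hx k (lt_add_one k)).le)]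
    exact (hP k (lt_add_one k)).2

end PiecewisePolynomial

section ClampedSpline

variable {n : ℕ} {x y m : ℕ → ℝ} {k₀ kₙ : ℝ} {i : ℕ}

noncomputable def hermitePiece (x y m : ℕ → ℝ) (i : ℕ) : ℝ[X] :=
  cubicHermite (x i) (x (i + 1)) (y i) (y (i + 1)) (m i) (m (i + 1))

theorem hasNodeValues_hermitePiece (hx : ∀ i < n, x i < x (i + 1)) :
    HasNodeValues n x (hermitePiece x y m) y :=
  fun i hi => ⟨eval_cubicHermite_left .., eval_cubicHermite_right (hx i hi).ne⟩

theorem hasNodeValues_derivative_hermitePiece (hx : ∀ i < n, x i < x (i + 1)) :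
    HasNodeValues n x (fun i => (hermitePiece x y m i).derivative) m :=
  fun i hi =>
    ⟨eval_derivative_cubicHermite_left .., eval_derivative_cubicHermite_right (hx i hi).ne⟩

noncomputable def invStep (x : ℕ → ℝ) (i : ℕ) : ℝ := (x (i + 1) - x i)⁻¹

-- Equation `i` expresses continuity of `S''` at the node `x (i + 1)`.
noncomputable def slopeOperator (x : ℕ → ℝ) : (ℕ → ℝ) → ℕ → ℝ :=
  tridiag (invStep x) (fun i => 2 * (invStep x i + invStep x (i + 1)))
    (fun i => invStep x (i + 1))

noncomputable def slopeRhs (x y : ℕ → ℝ) (i : ℕ) : ℝ :=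
  3 * ((y (i + 1) - y i) * invStep x i ^ 2 + (y (i + 2) - y (i + 1)) * invStep x (i + 1) ^ 2)

theorem hermitePiece_derivative_derivative_eq_iff (h₀ : x i ≠ x (i + 1)) :
    (hermitePiece x y m i).derivative.derivative.eval (x (i + 1)) =
        (hermitePiece x y m (i + 1)).derivative.derivative.eval (x (i + 1)) ↔
      slopeOperator x m i = slopeRhs x y i := by
  rw [hermitePiece, hermitePiece, eval_derivative_derivative_cubicHermite_right h₀,
    eval_derivative_derivative_cubicHermite_left]
  simp only [slopeOperator, tridiag, slopeRhs, invStep]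
  constructor <;> intro h <;> linarith

def IsClampedSlopes (n : ℕ) (x y : ℕ → ℝ) (k₀ kₙ : ℝ) (m : ℕ → ℝ) : Prop :=
  m 0 = k₀ ∧ m n = kₙ ∧ ∀ i, i + 2 ≤ n → slopeOperator x m i = slopeRhs x y i

theorem abs_invStep_add_lt (hx : ∀ i < n, x i < x (i + 1)) (hi : i + 2 ≤ n) :
    |invStep x i| + |invStep x (i + 1)| < |2 * (invStep x i + invStep x (i + 1))| := by
  have h₀ : 0 < invStep x i := inv_pos.2 (sub_pos.2 (hx i (by omega)))
  have h₁ : 0 < invStep x (i + 1) := inv_pos.2 (sub_pos.2 (hx (i + 1) (by omega)))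
  rw [abs_of_pos h₀, abs_of_pos h₁, abs_of_pos (by positivity)]
  linarith

theorem exists_isClampedSlopes (hn : 0 < n) (hx : ∀ i < n, x i < x (i + 1)) (y : ℕ → ℝ)
    (k₀ kₙ : ℝ) : ∃ m, IsClampedSlopes n x y k₀ kₙ m :=
  exists_tridiag_eq hn (fun _ hi => abs_invStep_add_lt hx hi) (slopeRhs x y) k₀ kₙ

theorem IsClampedSlopes.eqOn (hx : ∀ i < n, x i < x (i + 1)) {m' : ℕ → ℝ}
    (hm : IsClampedSlopes n x y k₀ kₙ m) (hm' : IsClampedSlopes n x y k₀ kₙ m') :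
    EqOn m m' (Iic n) :=
  eqOn_of_tridiag_eq (fun _ hi => abs_invStep_add_lt hx hi) (hm.1.trans hm'.1.symm)
    (hm.2.1.trans hm'.2.1.symm) fun i hi => (hm.2.2 i hi).trans (hm'.2.2 i hi).symm

def IsClampedSpline (n : ℕ) (x y : ℕ → ℝ) (k₀ kₙ : ℝ) (S : ℝ → ℝ) : Prop :=
  IsCubicSplineInterpolant n x y S ∧ derivWithin S (Icc (x 0) (x n)) (x 0) = k₀ ∧
    derivWithin S (Icc (x 0) (x n)) (x n) = kₙ

theorem isCubicSplineInterpolant_iff {S : ℝ → ℝ} :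
    IsCubicSplineInterpolant n x y S ↔ ContDiffOn ℝ 2 S (Icc (x 0) (x n)) ∧
      (∀ i < n, ∃ P : ℝ[X], P.degree ≤ 3 ∧ EqOn S P.eval (Icc (x i) (x (i + 1)))) ∧
      ∀ i ≤ n, S (x i) = y i := by
  refine and_congr_right fun _ => and_congr_left fun _ =>
    ⟨fun h i hi => ?_, fun h i hi hin => ?_⟩
  · simpa only [Nat.add_sub_cancel, EqOn] using h (i + 1) (by omega) hi
  · obtain ⟨k, rfl⟩ : ∃ k, i = k + 1 := ⟨i - 1, by omega⟩
    simpa only [Nat.add_sub_cancel, EqOn] using h k hin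

theorem IsClampedSlopes.isClampedSpline (hn : 0 < n) (hx : ∀ i < n, x i < x (i + 1))
    (hm : IsClampedSlopes n x y k₀ kₙ m) :
    IsClampedSpline n x y k₀ kₙ (piecewisePoly n x (hermitePiece x y m)) := by
  set P := hermitePiece x y m
  have h₀ : AgreeAtNodes n x P := (hasNodeValues_hermitePiece hx).agreeAtNodes
  have h₁ : AgreeAtNodes n x fun i => (P i).derivative :=
    (hasNodeValues_derivative_hermitePiece hx).agreeAtNodes
  have h₂ : AgreeAtNodes n x fun i => (P i).derivative.derivative := fun i hi =>
    (hermitePiece_derivative_derivative_eq_iff (hx i (by omega)).ne).2 (hm.2.2 i (by omega))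
  have hI : UniqueDiffOn ℝ (Icc (x 0) (x n)) :=
    uniqueDiffOn_Icc (strictMonoOn_Iic_of_lt_succ hx (by simp) (by simp) hn)
  have hS := fun u (_ : u ∈ Icc (x 0) (x n)) =>
    h₀.hasDerivWithinAt_piecewisePoly hn hx h₁ (u := u)
  have hS' := fun u (_ : u ∈ Icc (x 0) (x n)) =>
    h₁.hasDerivWithinAt_piecewisePoly hn hx h₂ (u := u)
  have hslope : ∀ i ≤ n, derivWithin (piecewisePoly n x P) (Icc (x 0) (x n)) (x i) = m i :=
    fun i hi => ((hS _ (node_mem_Icc hx hi)).derivWithin (hI _ (node_mem_Icc hx hi))).trans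
      ((hasNodeValues_derivative_hermitePiece hx).piecewisePoly_node hn hx hi)
  refine ⟨isCubicSplineInterpolant_iff.2 ⟨contDiffOn_two_of_hasDerivWithinAt hI hS hS'
    (h₂.continuousOn_piecewisePoly hn hx), fun i hi => ⟨P i, degree_taylorCubic_le ..,
    fun u hu => h₀.piecewisePoly_eq hx hi hu⟩,
    fun i hi => (hasNodeValues_hermitePiece hx).piecewisePoly_node hn hx hi⟩,
    (hslope 0 (Nat.zero_le n)).trans hm.1, (hslope n le_rfl).trans hm.2.1⟩

noncomputable def nodeSlopes (n : ℕ) (x : ℕ → ℝ) (T : ℝ → ℝ) (i : ℕ) : ℝ :=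
  derivWithin T (Icc (x 0) (x n)) (x i)

theorem eqOn_derivWithin_of_eqOn_eval (hx : ∀ i < n, x i < x (i + 1)) (hi : i < n) {f : ℝ → ℝ}
    (hf : DifferentiableOn ℝ f (Icc (x 0) (x n))) {Q : ℝ[X]}
    (hfQ : EqOn f Q.eval (Icc (x i) (x (i + 1)))) :
    EqOn (derivWithin f (Icc (x 0) (x n))) Q.derivative.eval (Icc (x i) (x (i + 1))) :=
  fun u hu => derivWithin_eq_of_eqOn (Icc_succ_subset_Icc hx hi) (uniqueDiffOn_Icc (hx i hi) u hu)
    hu (hf u (Icc_succ_subset_Icc hx hi hu)) hfQ (Q.hasDerivAt u)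

variable {T : ℝ → ℝ}

theorem IsCubicSplineInterpolant.eqOn_hermitePiece (hx : ∀ i < n, x i < x (i + 1))
    (hT : IsCubicSplineInterpolant n x y T) (hi : i < n) :
    EqOn T (hermitePiece x y (nodeSlopes n x T) i).eval (Icc (x i) (x (i + 1))) := by
  obtain ⟨hT₂, hpieces, hTy⟩ := isCubicSplineInterpolant_iff.1 hT
  obtain ⟨Q, hQ, hTQ⟩ := hpieces i hi
  have hT' := eqOn_derivWithin_of_eqOn_eval hx hi (hT₂.differentiableOn two_ne_zero) hTQ
  have hl := left_mem_Icc.2 (hx i hi).le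
  have hr := right_mem_Icc.2 (hx i hi).le
  obtain ⟨hHl, hHr⟩ := hasNodeValues_hermitePiece (y := y) (m := nodeSlopes n x T) hx i hi
  obtain ⟨hH'l, hH'r⟩ :=
    hasNodeValues_derivative_hermitePiece (y := y) (m := nodeSlopes n x T) hx i hi
  have hQH : Q = hermitePiece x y (nodeSlopes n x T) i :=
    eq_of_degree_le_three_of_eval_derivative_eq hQ (degree_taylorCubic_le ..) (hx i hi).ne
      ((hTQ hl).symm.trans ((hTy i hi.le).trans hHl.symm))
      ((hTQ hr).symm.trans ((hTy (i + 1) hi).trans hHr.symm))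
      ((hT' hl).symm.trans hH'l.symm) ((hT' hr).symm.trans hH'r.symm)
  rwa [← hQH]

theorem IsCubicSplineInterpolant.agreeAtNodes_derivative_derivative (hn : 0 < n)
    (hx : ∀ i < n, x i < x (i + 1)) (hT : IsCubicSplineInterpolant n x y T) :
    AgreeAtNodes n x fun i => (hermitePiece x y (nodeSlopes n x T) i).derivative.derivative := by
  intro i hi
  have hI : UniqueDiffOn ℝ (Icc (x 0) (x n)) :=
    uniqueDiffOn_Icc (strictMonoOn_Iic_of_lt_succ hx (by simp) (by simp) hn)
  have hT₁ : DifferentiableOn ℝ (derivWithin T (Icc (x 0) (x n))) (Icc (x 0) (x n)) :=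
    (hT.1.derivWithin hI (m := 1) le_rfl).differentiableOn one_ne_zero
  have hT₂ : ∀ j < n, EqOn (derivWithin (derivWithin T (Icc (x 0) (x n))) (Icc (x 0) (x n)))
      (hermitePiece x y (nodeSlopes n x T) j).derivative.derivative.eval
      (Icc (x j) (x (j + 1))) := fun j hj =>
    eqOn_derivWithin_of_eqOn_eval hx hj hT₁ (eqOn_derivWithin_of_eqOn_eval hx hj
      (hT.1.differentiableOn two_ne_zero) (hT.eqOn_hermitePiece hx hj))
  exact (hT₂ i (by omega) (right_mem_Icc.2 (hx i (by omega)).le)).symm.trans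
    (hT₂ (i + 1) hi (left_mem_Icc.2 (hx (i + 1) hi).le))

theorem IsClampedSpline.isClampedSlopes (hn : 0 < n) (hx : ∀ i < n, x i < x (i + 1))
    (hT : IsClampedSpline n x y k₀ kₙ T) : IsClampedSlopes n x y k₀ kₙ (nodeSlopes n x T) :=
  ⟨hT.2.1, hT.2.2, fun i hi => (hermitePiece_derivative_derivative_eq_iff (hx i (by omega)).ne).1
    (hT.1.agreeAtNodes_derivative_derivative hn hx i (by omega))⟩

end ClampedSpline

/-- **Existence and uniqueness of the clamped cubic spline interpolant.**
For `n ≥ 1`, nodes `x 0 < x 1 < ⋯ < x n`, values `y 0, …, y n` and endpoint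
slopes `k₀, kₙ ∈ ℝ` there is a function `S : [x 0, x n] → ℝ`, unique as a
function on `[x 0, x n]`, that is a cubic spline interpolant of the data and
satisfies the clamped boundary conditions `S′(x 0) = k₀` and `S′(x n) = kₙ`. -/
theorem clamped_cubic_spline_exists_unique
    (n : ℕ) (hn : 1 ≤ n) (x : ℕ → ℝ) (hx : ∀ i, i < n → x i < x (i + 1))
    (y : ℕ → ℝ) (k₀ kₙ : ℝ) :
    ∃ S : ℝ → ℝ,
      (IsCubicSplineInterpolant n x y S ∧
        derivWithin S (Icc (x 0) (x n)) (x 0) = k₀ ∧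
        derivWithin S (Icc (x 0) (x n)) (x n) = kₙ) ∧
      ∀ T : ℝ → ℝ,
        (IsCubicSplineInterpolant n x y T ∧
          derivWithin T (Icc (x 0) (x n)) (x 0) = k₀ ∧
          derivWithin T (Icc (x 0) (x n)) (x n) = kₙ) →
        EqOn T S (Icc (x 0) (x n)) := by
  obtain ⟨m, hm⟩ := exists_isClampedSlopes hn hx y k₀ kₙ
  refine ⟨piecewisePoly n x (hermitePiece x y m), hm.isClampedSpline hn hx, fun T hT u hu => ?_⟩
  obtain ⟨i, hi, hui⟩ := mem_iUnion₂.1 (Icc_subset_biUnion_Icc hn x hu)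
  rw [Finset.mem_range] at hi
  have hslopes := (IsClampedSpline.isClampedSlopes hn hx hT).eqOn hx hm
  have hpiece : hermitePiece x y (nodeSlopes n x T) i = hermitePiece x y m i := by
    rw [hermitePiece, hermitePiece, hslopes (mem_Iic.2 hi.le), hslopes (mem_Iic.2 hi)]
  rw [hT.1.eqOn_hermitePiece hx hi hui, hpiece,
    (hasNodeValues_hermitePiece hx).agreeAtNodes.piecewisePoly_eq hx hi hui]
end

section
/- Solvability by radicals of polynomials of degree at most four: for every polynomial p ∈ ℚ[X] with 1 ≤ deg p ≤ 4 and every root α ∈ ℂ of p, the element α is solvable by radicals over ℚ, i.e., α lies in the subfield solvableByRad ℚ ℂ of elements of ℂ obtainable from ℚ by field operations and extraction of n-th roots. -/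
/-! Each root is obtained from the coefficients by the classical formulas: completing the square
for quadratics, Cardano's substitution `α = u + v` for depressed cubics, and Ferrari's resolvent
cubic for depressed quartics, after the translation `α ↦ α + b / n` that removes the second
coefficient of a monic polynomial of degree `n`. Every quantity these formulas introduce is a
root of a polynomial equation whose coefficients have already been constructed, and
`solvableByRad` is a field closed under extracting roots. -/

open Polynomial

theorem IsAlgClosed.exists_cubic_eq_zero {K : Type*} [Field K] [IsAlgClosed K] (b c d : K) :
    ∃ y : K, y ^ 3 + b * y ^ 2 + c * y + d = 0 := by
  have hdeg : (X ^ 3 + C b * X ^ 2 + C c * X + C d).degree = 3 := by compute_degree!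
  obtain ⟨y, hy⟩ := IsAlgClosed.exists_root _ (by rw [hdeg]; decide)
  exact ⟨y, by simpa using hy⟩

namespace solvableByRad

variable {F E : Type*} [Field F] [Field E] [Algebra F E] [CharZero E]

attribute [local aesop safe apply] add_mem sub_mem mul_mem div_mem pow_mem neg_mem ofNat_mem

local notation "𝓡" => solvableByRad F E

theorem mem_of_quadratic {b c α : E} (hb : b ∈ 𝓡) (hc : c ∈ 𝓡)
    (h : α ^ 2 + b * α + c = 0) : α ∈ 𝓡 := by
  have hδ : 2 * α + b ∈ 𝓡 := by
    refine rad_mem two_ne_zero ?_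
    rw [show (2 * α + b) ^ 2 = b ^ 2 - 4 * c by linear_combination 4 * h]
    aesop
  rw [show α = (2 * α + b - b) / 2 by ring]
  exact div_mem (sub_mem hδ hb) (ofNat_mem _ 2)

variable [IsAlgClosed E]

theorem mem_of_depressed_cubic {p q α : E} (hp : p ∈ 𝓡) (hq : q ∈ 𝓡)
    (h : α ^ 3 + p * α + q = 0) : α ∈ 𝓡 := by
  -- Cardano: the roots `u`, `v` of `X ^ 2 - α * X - p / 3` satisfy `u + v = α` and
  -- `u * v = -p / 3`, so `u ^ 3` and `v ^ 3` are the roots of `X ^ 2 + q * X - p ^ 3 / 27`.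
  have cardano : ∀ u, u ^ 2 - α * u - p / 3 = 0 → u ∈ 𝓡 := fun u hu =>
    rad_mem three_ne_zero <| mem_of_quadratic (c := -(p ^ 3 / 27)) hq (by aesop) <| by
      linear_combination u ^ 3 * h +
        (u ^ 4 + α * u ^ 3 + (p / 3 + α ^ 2) * u ^ 2 - p / 3 * α * u + (p / 3) ^ 2) * hu
  obtain ⟨s, hs⟩ := IsAlgClosed.exists_pow_nat_eq (α ^ 2 + 4 * p / 3) two_pos
  have hu : ((α + s) / 2) ^ 2 - α * ((α + s) / 2) - p / 3 = 0 := by linear_combination hs / 4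
  have hv : (α - (α + s) / 2) ^ 2 - α * (α - (α + s) / 2) - p / 3 = 0 := by
    linear_combination hu
  rw [show α = (α + s) / 2 + (α - (α + s) / 2) by ring]
  exact add_mem (cardano _ hu) (cardano _ hv)

theorem mem_of_cubic {b c d α : E} (hb : b ∈ 𝓡) (hc : c ∈ 𝓡) (hd : d ∈ 𝓡)
    (h : α ^ 3 + b * α ^ 2 + c * α + d = 0) : α ∈ 𝓡 := by
  have hshift : α + b / 3 ∈ 𝓡 :=
    mem_of_depressed_cubic (p := c - b ^ 2 / 3) (q := d - b * c / 3 + 2 * b ^ 3 / 27)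
      (by aesop) (by aesop) (by linear_combination h)
  rw [show α = α + b / 3 - b / 3 by ring]
  exact sub_mem hshift (div_mem hb (ofNat_mem _ 3))

theorem mem_of_depressed_quartic {p q r α : E} (hp : p ∈ 𝓡) (hq : q ∈ 𝓡) (hr : r ∈ 𝓡)
    (h : α ^ 4 + p * α ^ 2 + q * α + r = 0) : α ∈ 𝓡 := by
  -- Ferrari: `(α ^ 2 + p / 2 + y) ^ 2 = 2 * y * α ^ 2 - q * α + (y ^ 2 + p * y + p ^ 2 / 4 - r)`,
  -- and the right side is a square `(s * α - t) ^ 2` exactly when `y` is a root of the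
  -- resolvent cubic below.
  obtain ⟨y, hy⟩ := IsAlgClosed.exists_cubic_eq_zero p (p ^ 2 / 4 - r) (-(q ^ 2 / 8))
  have hyR : y ∈ 𝓡 := mem_of_cubic hp (by aesop) (by aesop) hy
  obtain ⟨s, hs⟩ := IsAlgClosed.exists_pow_nat_eq (2 * y) two_pos
  obtain ⟨t₀, ht₀⟩ := IsAlgClosed.exists_pow_nat_eq (y ^ 2 + p * y + p ^ 2 / 4 - r) two_pos
  obtain ⟨t, ht, hst⟩ : ∃ t, t ^ 2 = y ^ 2 + p * y + p ^ 2 / 4 - r ∧ 2 * s * t = q := by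
    have : (2 * s * t₀) ^ 2 = q ^ 2 := by
      linear_combination 4 * t₀ ^ 2 * hs + 8 * y * ht₀ + 8 * hy
    rcases sq_eq_sq_iff_eq_or_eq_neg.mp this with hpos | hneg
    · exact ⟨t₀, ht₀, hpos⟩
    · exact ⟨-t₀, by rw [neg_sq, ht₀], by linear_combination -hneg⟩
  have hsR : s ∈ 𝓡 := rad_mem two_ne_zero (by rw [hs]; aesop)
  have htR : t ∈ 𝓡 := rad_mem two_ne_zero (by rw [ht]; aesop)
  have hfactor : (α ^ 2 - s * α + (p / 2 + y + t)) * (α ^ 2 + s * α + (p / 2 + y - t)) = 0 := by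
    linear_combination h - α ^ 2 * hs + α * hst - ht
  rcases mul_eq_zero.mp hfactor with h₁ | h₂
  · exact mem_of_quadratic (b := -s) (c := p / 2 + y + t) (by aesop) (by aesop)
      (by linear_combination h₁)
  · exact mem_of_quadratic hsR (by aesop) h₂

theorem mem_of_quartic {b c d e α : E} (hb : b ∈ 𝓡) (hc : c ∈ 𝓡) (hd : d ∈ 𝓡) (he : e ∈ 𝓡)
    (h : α ^ 4 + b * α ^ 3 + c * α ^ 2 + d * α + e = 0) : α ∈ 𝓡 := by
  have hshift : α + b / 4 ∈ 𝓡 :=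
    mem_of_depressed_quartic (p := c - 3 * b ^ 2 / 8) (q := d - b * c / 2 + b ^ 3 / 8)
      (r := e - b * d / 4 + b ^ 2 * c / 16 - 3 * b ^ 4 / 256)
      (by aesop) (by aesop) (by aesop) (by linear_combination h)
  rw [show α = α + b / 4 - b / 4 by ring]
  exact sub_mem hshift (div_mem hb (ofNat_mem _ 4))

theorem mem_of_monic_of_natDegree_le_four {q : F[X]} (hq : q.Monic) (hdeg : q.natDegree ≤ 4)
    {α : E} (hα : aeval α q = 0) : α ∈ 𝓡 := by
  have hcoeff (i : ℕ) : algebraMap F E (q.coeff i) ∈ 𝓡 := IntermediateField.algebraMap_mem _ _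
  have hlead := hq.coeff_natDegree
  rw [aeval_eq_sum_range] at hα
  interval_cases q.natDegree <;>
    simp only [Finset.sum_range_succ, Finset.sum_range_zero, hlead, Algebra.smul_def, map_one,
      pow_zero, pow_one, one_mul, mul_one, zero_add] at hα
  · exact absurd hα one_ne_zero
  · rw [eq_neg_of_add_eq_zero_right hα]
    exact neg_mem (hcoeff 0)
  · exact mem_of_quadratic (hcoeff 1) (hcoeff 0) (by linear_combination hα)
  · exact mem_of_cubic (hcoeff 2) (hcoeff 1) (hcoeff 0) (by linear_combination hα)
  · exact mem_of_quartic (hcoeff 3) (hcoeff 2) (hcoeff 1) (hcoeff 0) (by linear_combination hα)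

end solvableByRad

/-- **Solvability by radicals of polynomials of degree at most four:**
every root `α ∈ ℂ` of a polynomial `p ∈ ℚ[X]` with `1 ≤ deg p ≤ 4` lies in the
subfield `solvableByRad ℚ ℂ` of elements of `ℂ` expressible from `ℚ` by field
operations and extraction of `n`-th roots. -/
theorem root_of_degree_le_four_solvableByRad
    (p : Polynomial ℚ) (hdeg₁ : 1 ≤ p.degree) (hdeg₄ : p.degree ≤ 4)
    (α : ℂ) (hα : Polynomial.aeval α p = 0) :
    α ∈ solvableByRad ℚ ℂ := by
  have hp : p ≠ 0 := by rintro rfl; simp at hdeg₁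
  refine solvableByRad.mem_of_monic_of_natDegree_le_four (monic_mul_leadingCoeff_inv hp) ?_ ?_
  · rw [natDegree_mul_leadingCoeff_inv _ hp]
    exact natDegree_le_iff_degree_le.mpr hdeg₄
  · simp [hα]
end
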